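/- (Foster's theorem) For a finite connected simple graph G on n vertices, the sum of the resistance distances Ω_{ij} over all edges {i,j} of G equals n − 1. -/

import Mathlib

/-!
Summing `B i i + B j j - 2 * B i j` over the ordered pairs of adjacent vertices gives
`2 * trace (L * B)` for any matrix `B`, so the claim is `trace (L * Γ⁻¹) = n - 1`.
The rows and columns of `L` sum to zero, so `Γ` fixes the all-ones vector and preserves
coordinate sums. A vector killed by `Γ` therefore has zero sum, so it is killed by `L`, hence is
constant on the connected graph, hence zero. Thus `Γ` is invertible, `Γ⁻¹ J = J`, and
`trace (L * Γ⁻¹) = trace ((Γ - J / n) * Γ⁻¹) = n - trace J / n = n - 1`.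
-/

open Matrix SimpleGraph Finset

variable {V : Type*} [Fintype V] [DecidableEq V]

/-- The matrix Γ = L + (1/n)J where L is the Laplacian and J the all-ones matrix. -/
noncomputable def gammaMatrix (G : SimpleGraph V) : Matrix V V ℝ := by
  classical
  exact G.lapMatrix ℝ + ((Fintype.card V : ℝ))⁻¹ • Matrix.of (fun _ _ => (1 : ℝ))

/-- The resistance distance Ω_{ij} = (Γ⁻¹)_{ii} + (Γ⁻¹)_{jj} − 2(Γ⁻¹)_{ij}. -/
noncomputable def resDist (G : SimpleGraph V) (i j : V) : ℝ :=
  (gammaMatrix G)⁻¹ i i + (gammaMatrix G)⁻¹ j j - 2 * (gammaMatrix G)⁻¹ i j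

namespace SimpleGraph

variable {R : Type*} [CommRing R] (G : SimpleGraph V) [DecidableRel G.Adj]

theorem sum_lapMatrix_mulVec (x : V → R) : ∑ i, (G.lapMatrix R *ᵥ x) i = 0 := by
  have h : 1 ᵥ* G.lapMatrix R = 0 := by
    rw [← mulVec_transpose, isSymm_lapMatrix R G]
    exact lapMatrix_mulVec_const_eq_zero G
  rw [← one_dotProduct, dotProduct_mulVec, h, zero_dotProduct]

theorem diag_lapMatrix_mul (B : Matrix V V R) (i : V) :
    (G.lapMatrix R * B).diag i = ∑ j, if G.Adj i j then B i i - B j i else 0 := by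
  simp [lapMatrix, sub_mul, degMatrix, neighborFinset_eq_filter, ← sum_filter, sum_sub_distrib,
    degree]

theorem two_mul_trace_lapMatrix_mul (B : Matrix V V R) :
    2 * trace (G.lapMatrix R * B) =
      ∑ i, ∑ j, if G.Adj i j then B i i + B j j - 2 * B i j else 0 := by
  have swap (f : V → V → R) : ∑ i, ∑ j, (if G.Adj i j then f i j else 0) =
      ∑ i, ∑ j, (if G.Adj i j then f j i else 0) := by
    rw [sum_comm]
    simp_rw [G.adj_comm]
  have hdiag := swap fun i _ => B i i
  have hoff := swap fun i j => B i j
  simp only [trace, diag_lapMatrix_mul, ← sum_filter, sum_add_distrib, sum_sub_distrib,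
    ← mul_sum] at hdiag hoff ⊢
  linear_combination hdiag + 2 * hoff

end SimpleGraph

section

variable (G : SimpleGraph V) [DecidableRel G.Adj]

-- `gammaMatrix` is built from the classical `DecidableRel G.Adj` instance, not the given one.
theorem gammaMatrix_eq :
    gammaMatrix G = G.lapMatrix ℝ + (Fintype.card V : ℝ)⁻¹ • of fun _ _ => 1 := by
  unfold gammaMatrix
  congr!

theorem gammaMatrix_mulVec (x : V → ℝ) :
    gammaMatrix G *ᵥ x = G.lapMatrix ℝ *ᵥ x + fun _ => (Fintype.card V : ℝ)⁻¹ * ∑ i, x i := by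
  ext i
  simp [gammaMatrix_eq, mulVec, dotProduct, add_mul, sum_add_distrib, mul_sum]

theorem gammaMatrix_mulVec_one [Nonempty V] : gammaMatrix G *ᵥ 1 = 1 := by
  have hL : G.lapMatrix ℝ *ᵥ 1 = 0 := lapMatrix_mulVec_const_eq_zero G
  ext i
  simp [gammaMatrix_mulVec, hL]

theorem eq_zero_of_gammaMatrix_mulVec_eq_zero (hG : G.Connected) {x : V → ℝ}
    (hx : gammaMatrix G *ᵥ x = 0) : x = 0 := by
  have : Nonempty V := hG.nonempty
  have hsum : ∑ i, x i = 0 := by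
    simpa [gammaMatrix_mulVec, sum_add_distrib, sum_lapMatrix_mulVec, Fintype.card_ne_zero] using
      congrArg (fun y => ∑ i, y i) hx
  have hL : G.lapMatrix ℝ *ᵥ x = 0 := by
    rwa [gammaMatrix_mulVec, hsum, mul_zero, ← Pi.zero_def, add_zero] at hx
  ext i
  have hconst j : x j = x i :=
    lapMatrix_mulVec_eq_zero_iff_forall_reachable G |>.mp hL _ _ (hG _ _)
  simpa [hconst, Fintype.card_ne_zero] using hsum

theorem isUnit_det_gammaMatrix (hG : G.Connected) : IsUnit (gammaMatrix G).det := by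
  rw [isUnit_iff_ne_zero, Ne, ← exists_mulVec_eq_zero_iff]
  rintro ⟨x, hx0, hx⟩
  exact hx0 (eq_zero_of_gammaMatrix_mulVec_eq_zero G hG hx)

theorem trace_lapMatrix_mul_inv_gammaMatrix (hG : G.Connected) :
    trace (G.lapMatrix ℝ * (gammaMatrix G)⁻¹) = Fintype.card V - 1 := by
  have : Nonempty V := hG.nonempty
  have hdet := isUnit_det_gammaMatrix G hG
  have hinv : (gammaMatrix G)⁻¹ *ᵥ 1 = 1 := by
    conv_lhs => rw [← gammaMatrix_mulVec_one G]
    rw [mulVec_mulVec, nonsing_inv_mul _ hdet, one_mulVec]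
  have hJ : (gammaMatrix G)⁻¹ * (of fun _ _ => 1) = of fun _ _ => 1 := by
    ext i j
    simpa [mul_apply, mulVec, dotProduct] using congrFun hinv i
  have hL : G.lapMatrix ℝ = gammaMatrix G - (Fintype.card V : ℝ)⁻¹ • of fun _ _ => 1 := by
    rw [gammaMatrix_eq, add_sub_cancel_right]
  rw [hL, sub_mul, mul_nonsing_inv _ hdet, smul_mul, trace_sub, trace_smul, trace_one,
    trace_mul_comm, hJ]
  simp [trace, Fintype.card_ne_zero]

end

theorem foster_general (G : SimpleGraph V) [DecidableRel G.Adj] (hG : G.Connected) :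
    (1 / 2 : ℝ) * ∑ i : V, ∑ j : V, (if G.Adj i j then resDist G i j else 0)
      = Fintype.card V - 1 := by
  unfold resDist
  rw [← two_mul_trace_lapMatrix_mul, trace_lapMatrix_mul_inv_gammaMatrix G hG]
  ring

/-- Foster's theorem: the sum of resistance distances over the edges of a connected graph
equals n - 1.  The sum over unordered edges is expressed as half the sum over ordered
adjacent pairs. -/
theorem foster (G : SimpleGraph V) [Nonempty V] [DecidableRel G.Adj] (hG : G.Connected) :
    (1 / 2 : ℝ) * ∑ i : V, ∑ j : V, (if G.Adj i j then resDist G i j else 0)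
      = Fintype.card V - 1 :=
  foster_general G hG
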